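/- Let n ≥ 3 and W the n × n Wielandt matrix. For every u ∈ {1,...,n-1}, the entry (W^{n^2-3n+2}) u (n-1) is positive, while (W^{n^2-3n+2}) n (n-1) = 0. Consequently the set S_{n^2-3n+2}(W, n-1) = { u : (W^{n^2-3n+2}) u (n-1) > 0 } equals {1,...,n-1}. -/

import Mathlib

/-!
Entry `(u, v)` of `W ^ k` is positive iff the Wielandt digraph (vertices `0, …, n - 1`) has a walk
of length `k` from `u` to `v`. The in-neighbours of `n - 2` are `0` and `n - 1`, and the only
in-neighbour of `n - 1` is `0`, so `u` reaches `n - 2` in `k + 2` steps iff it reaches `0` in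
`k + 1` or `k` steps. A walk from `u` to `0` descends to `0` and then runs around the two cycles
through `0`, of lengths `n` and `n - 1`, so the possible lengths are `u + a n + b (n - 1)`. For
`k + 2 = n² - 3n + 2` and `u < n - 1` such decompositions are written down; for `u = n - 1` either
one would represent the Frobenius number `n (n - 1) - n - (n - 1) = n² - 3n + 1` of `{n - 1, n}`.
-/

/-- The `n × n` Wielandt matrix: `W i j = 1` iff (`i ≥ 2` and `j = i - 1`) or
(`i = 1` and `j ∈ {n-1, n}`), written here with 0-based indexing via `Fin n`. -/
def wielandt (n : ℕ) : Matrix (Fin n) (Fin n) ℕ := fun i j =>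
  if (1 ≤ i.val ∧ j.val + 1 = i.val) ∨ (i.val = 0 ∧ (j.val = n - 2 ∨ j.val = n - 1))
  then 1 else 0

namespace Matrix

section PositiveEntries

variable {l m o R : Type*} [CommSemiring R] [PartialOrder R] [CanonicallyOrderedAdd R]
  [NoZeroDivisors R]

theorem mul_apply_pos_iff [Fintype m] (A : Matrix l m R) (B : Matrix m o R) (i : l) (k : o) :
    0 < (A * B) i k ↔ ∃ j, 0 < A i j ∧ 0 < B j k := by
  simp only [mul_apply, Finset.sum_pos_iff, Finset.mem_univ, true_and,
    CanonicallyOrderedAdd.mul_pos]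

variable [Fintype m] [DecidableEq m] (A : Matrix m m R)

theorem pow_succ_apply_pos_iff (k : ℕ) (i j : m) :
    0 < (A ^ (k + 1)) i j ↔ ∃ w, 0 < (A ^ k) i w ∧ 0 < A w j := by
  rw [pow_succ, mul_apply_pos_iff]

theorem pow_succ_apply_pos_iff' (k : ℕ) (i j : m) :
    0 < (A ^ (k + 1)) i j ↔ ∃ w, 0 < A i w ∧ 0 < (A ^ k) w j := by
  rw [pow_succ', mul_apply_pos_iff]

variable {A}

theorem pow_add_apply_pos {p q : ℕ} {i j k : m} (hp : 0 < (A ^ p) i j) (hq : 0 < (A ^ q) j k) :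
    0 < (A ^ (p + q)) i k := by
  rw [pow_add, mul_apply_pos_iff]
  exact ⟨j, hp, hq⟩

theorem pow_mul_apply_self_pos [Nontrivial R] {p : ℕ} {i : m} (h : 0 < (A ^ p) i i) (c : ℕ) :
    0 < (A ^ (c * p)) i i := by
  induction c with
  | zero => simp [pos_iff_ne_zero]
  | succ c ih => rw [Nat.succ_mul]; exact pow_add_apply_pos ih h

end PositiveEntries

end Matrix

open Matrix

section WielandtWalks

variable {n : ℕ}

theorem wielandt_apply_pos_iff (i j : Fin n) :
    0 < wielandt n i j ↔
      (1 ≤ i.val ∧ j.val + 1 = i.val) ∨ (i.val = 0 ∧ (j.val = n - 2 ∨ j.val = n - 1)) := by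
  unfold wielandt; split_ifs <;> simp_all

theorem wielandt_pow_apply_pos_of_val_eq_add (d : ℕ) {u v : Fin n} (h : u.val = v.val + d) :
    0 < (wielandt n ^ d) u v := by
  induction d generalizing u with
  | zero => simp [Fin.ext (h.trans (Nat.add_zero _))]
  | succ d ih =>
    rw [pow_succ_apply_pos_iff']
    refine ⟨⟨u - 1, by omega⟩, (wielandt_apply_pos_iff _ _).2 (.inl ⟨by omega, ?_⟩), ih ?_⟩ <;>
      dsimp only <;> omega

theorem wielandt_pow_apply_zero_pos_iff (hn : 2 ≤ n) (u : Fin n) (k : ℕ) :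
    0 < (wielandt n ^ k) u ⟨0, by omega⟩ ↔ ∃ a b, k = u + a * n + b * (n - 1) := by
  constructor
  · induction k generalizing u with
    | zero =>
      intro h
      have hu : u = ⟨0, by omega⟩ := by
        by_contra hne
        simp [one_apply_ne hne] at h
      exact ⟨0, 0, by simp [hu]⟩
    | succ k ih =>
      rw [pow_succ_apply_pos_iff']
      rintro ⟨w, huw, hw⟩
      obtain ⟨a, b, rfl⟩ := ih w hw
      rcases (wielandt_apply_pos_iff u w).1 huw with ⟨-, hw⟩ | ⟨hu, hw | hw⟩
      · exact ⟨a, b, by omega⟩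
      · exact ⟨a, b + 1, by rw [hu, hw]; ring_nf; omega⟩
      · exact ⟨a + 1, b, by rw [hu, hw]; ring_nf; omega⟩
  · rintro ⟨a, b, rfl⟩
    have cycle (v : Fin n) (hv : n - 2 ≤ v.val) :
        0 < (wielandt n ^ (1 + v.val)) ⟨0, by omega⟩ ⟨0, by omega⟩ :=
      pow_add_apply_pos (j := v)
        (by rw [pow_one, wielandt_apply_pos_iff]; right; dsimp only; omega)
        (wielandt_pow_apply_pos_of_val_eq_add _ (by simp))
    refine pow_add_apply_pos (pow_add_apply_pos
      (wielandt_pow_apply_pos_of_val_eq_add _ (by simp)) (pow_mul_apply_self_pos ?_ a))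
      (pow_mul_apply_self_pos ?_ b)
    · simpa [show 1 + (n - 1) = n by omega] using cycle ⟨n - 1, by omega⟩ (by dsimp only; omega)
    · simpa [show 1 + (n - 2) = n - 1 by omega] using cycle ⟨n - 2, by omega⟩ le_rfl

theorem wielandt_pow_add_two_apply_pos_iff (hn : 2 ≤ n) (u : Fin n) (k : ℕ) :
    0 < (wielandt n ^ (k + 2)) u ⟨n - 2, by omega⟩ ↔
      0 < (wielandt n ^ (k + 1)) u ⟨0, by omega⟩ ∨ 0 < (wielandt n ^ k) u ⟨0, by omega⟩ := by
  have reach_last (k : ℕ) :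
      0 < (wielandt n ^ (k + 1)) u ⟨n - 1, by omega⟩ ↔ 0 < (wielandt n ^ k) u ⟨0, by omega⟩ := by
    rw [pow_succ_apply_pos_iff]
    constructor
    · rintro ⟨w, hw, hwv⟩
      have hw0 : w = ⟨0, by omega⟩ := Fin.ext <| by
        have := (wielandt_apply_pos_iff _ _).1 hwv
        dsimp only at this ⊢
        omega
      rwa [hw0] at hw
    · exact fun h ↦ ⟨_, h, by simp [wielandt_apply_pos_iff]⟩
  rw [pow_succ_apply_pos_iff, ← reach_last k]
  constructor
  · rintro ⟨w, hw, hwv⟩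
    rcases (wielandt_apply_pos_iff _ _).1 hwv with ⟨-, h⟩ | ⟨h, -⟩
    · rw [show w = ⟨n - 1, by omega⟩ from Fin.ext (by dsimp only at h ⊢; omega)] at hw
      exact .inr hw
    · rw [show w = ⟨0, by omega⟩ from Fin.ext h] at hw
      exact .inl hw
  · rintro (h | h)
    · exact ⟨_, h, by simp [wielandt_apply_pos_iff]⟩
    · exact ⟨_, h, by simp [wielandt_apply_pos_iff]; omega⟩

theorem wielandt_exponent_decomposition_iff (hn : 3 ≤ n) {u : ℕ} (hu : u < n) :
    ((∃ a b, n ^ 2 - 3 * n + 1 = u + a * n + b * (n - 1)) ∨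
      ∃ a b, n ^ 2 - 3 * n = u + a * n + b * (n - 1)) ↔ u < n - 1 := by
  obtain ⟨m, rfl⟩ : ∃ m, n = m + 3 := ⟨n - 3, by omega⟩
  have hsq : (m + 3) ^ 2 - 3 * (m + 3) = m * (m + 3) := by
    rw [show (m + 3) ^ 2 = m * (m + 3) + 3 * (m + 3) by ring, Nat.add_sub_cancel]
  have hcop : Nat.Coprime (m + 2) (m + 3) := Nat.coprime_self_add_right.2 (Nat.coprime_one_right _)
  simp only [hsq, show m + 3 - 1 = m + 2 from rfl]
  constructor
  · intro h
    by_contra hlast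
    obtain rfl : u = m + 2 := by omega
    rcases h with ⟨a, b, h⟩ | ⟨a, b, h⟩
    · exact hcop.mul_add_mul_ne_mul (a := b + 2) (b := a + 1) (by omega) (by omega) (by linarith)
    · exact hcop.mul_add_mul_ne_mul (a := b + 1) (b := a + 2) (by omega) (by omega) (by linarith)
  · intro hlt
    rcases Nat.eq_zero_or_pos u with rfl | hpos
    · exact .inr ⟨m, 0, by ring⟩
    · obtain ⟨e, rfl⟩ : ∃ e, u = e + 1 := ⟨u - 1, by omega⟩
      obtain ⟨d, rfl⟩ : ∃ d, m = e + d := ⟨m - e, by omega⟩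
      exact .inl ⟨d, e, by ring⟩

end WielandtWalks

/-- In the `(n^2-3n+2)`-th power of the Wielandt matrix, the column `n-1` entries are
positive at every row `u < n-1`, zero at row `n`, and the support set equals `{1,...,n-1}`. -/
theorem wielandt_pow_col_partial (n : ℕ) (hn : 3 ≤ n) :
    (∀ u : Fin n, u.val < n - 1 →
        0 < (wielandt n ^ (n ^ 2 - 3 * n + 2)) u ⟨n - 2, by omega⟩) ∧
    (wielandt n ^ (n ^ 2 - 3 * n + 2)) ⟨n - 1, by omega⟩ ⟨n - 2, by omega⟩ = 0 ∧
    {u : Fin n | 0 < (wielandt n ^ (n ^ 2 - 3 * n + 2)) u ⟨n - 2, by omega⟩} =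
      {u : Fin n | u.val < n - 1} := by
  have support (u : Fin n) :
      0 < (wielandt n ^ (n ^ 2 - 3 * n + 2)) u ⟨n - 2, by omega⟩ ↔ u.val < n - 1 := by
    rw [wielandt_pow_add_two_apply_pos_iff (by omega), wielandt_pow_apply_zero_pos_iff (by omega),
      wielandt_pow_apply_zero_pos_iff (by omega)]
    exact wielandt_exponent_decomposition_iff hn u.isLt
  refine ⟨fun u ↦ (support u).2, ?_, Set.ext support⟩
  exact Nat.eq_zero_of_not_pos fun h ↦ ((support _).1 h).ne rfl
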